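/- Fix μ1 ∈ ℝ, μ2 > 0, σ1 > 0 and x ∈ ℝ. Then in the limit of a deterministic denominator (ρ = 0, σ2 → 0⁺), the quotient density converges to the density of a normal divided by the constant μ2: lim_{σ2 → 0⁺} (2π σ1 σ2)^{−1} ∫₀^∞ s·exp(−(s − μ2)²/(2σ2²))·exp(−(x·s − μ1)²/(2σ1²)) ds = (μ2/(√(2π)·σ1))·exp(−(x·μ2 − μ1)²/(2σ1²)). -/

import Mathlib

/-!
The substitution `s = μ2 + σ2 t` turns `σ2⁻¹ ∫ f(s) exp(-(s - μ2)² / (2σ2²)) ds` into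
`∫ f(μ2 + σ2 t) exp(-t²/2) dt`, where `f(s) = s exp(-(xs - μ1)² / (2σ1²))` on `s > 0` and `0`
elsewhere. This `f` grows at most linearly and is continuous at `μ2 > 0`, so dominated convergence
gives the limit `f(μ2) √(2π)`.
-/
open Real MeasureTheory Set Filter Topology

theorem integral_mul_exp_neg_sq_div_eq_mul_integral_comp (f : ℝ → ℝ) (m : ℝ) {σ : ℝ}
    (hσ : 0 < σ) :
    ∫ s, f s * exp (-(s - m) ^ 2 / (2 * σ ^ 2)) =
      σ * ∫ t, f (σ * t + m) * exp (-t ^ 2 / 2) := by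
  set F : ℝ → ℝ := fun s => f s * exp (-(s - m) ^ 2 / (2 * σ ^ 2))
  have hF : ∀ t, F (σ * t + m) = f (σ * t + m) * exp (-t ^ 2 / 2) := fun t => by
    simp only [F, add_sub_cancel_right]
    field_simp
  calc ∫ s, F s = ∫ y, F (y + m) := (integral_add_right_eq_self F m).symm
    _ = σ * ∫ t, F (σ * t + m) := by
      rw [Measure.integral_comp_mul_left (fun y => F (y + m)) σ, abs_of_pos (inv_pos.2 hσ),
        smul_eq_mul, mul_inv_cancel_left₀ hσ.ne']
    _ = σ * ∫ t, f (σ * t + m) * exp (-t ^ 2 / 2) := by simp only [hF]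

theorem integral_exp_neg_sq_div_two : ∫ t : ℝ, exp (-t ^ 2 / 2) = √(2 * π) := by
  have h := integral_gaussian (1 / 2)
  rw [show π / (1 / 2) = 2 * π by ring] at h
  rw [← h]
  congr 1 with t
  ring_nf

theorem integrable_one_add_abs_mul_exp_neg_sq_div_two :
    Integrable fun t : ℝ => (1 + |t|) * exp (-t ^ 2 / 2) := by
  have h1 := integrable_exp_neg_mul_sq (b := 1 / 2) (by norm_num)
  have h2 := (integrable_mul_exp_neg_mul_sq (b := 1 / 2) (by norm_num)).abs
  refine (h1.add h2).congr (Eventually.of_forall fun t => ?_)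
  simp only [Pi.add_apply, abs_mul, abs_exp]
  ring_nf

theorem tendsto_integral_comp_mul_add_mul_exp_neg_sq {f : ℝ → ℝ} {m C : ℝ}
    (hf : Measurable f) (hfm : ContinuousAt f m) (hbound : ∀ s, |f s| ≤ C * (1 + |s|)) :
    Tendsto (fun σ => ∫ t, f (σ * t + m) * exp (-t ^ 2 / 2)) (𝓝 0)
      (𝓝 (f m * √(2 * π))) := by
  have hC : 0 ≤ C := nonneg_of_mul_nonneg_left ((abs_nonneg _).trans (hbound 0)) (by positivity)
  rw [← integral_exp_neg_sq_div_two, ← integral_const_mul]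
  refine tendsto_integral_filter_of_dominated_convergence
    (fun t => C * (1 + |m|) * ((1 + |t|) * exp (-t ^ 2 / 2))) ?_ ?_
    (integrable_one_add_abs_mul_exp_neg_sq_div_two.const_mul _) ?_
  · exact Eventually.of_forall fun σ =>
      ((hf.comp (by fun_prop)).mul (by fun_prop)).aestronglyMeasurable
  · filter_upwards [Icc_mem_nhds neg_one_lt_zero one_pos] with σ hσ
    refine Eventually.of_forall fun t => ?_
    have hσt : |σ * t| ≤ |t| := by
      rw [abs_mul]
      exact mul_le_of_le_one_left (abs_nonneg t) (abs_le.2 hσ)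
    have hgrowth : 1 + |σ * t + m| ≤ (1 + |m|) * (1 + |t|) := by
      nlinarith [abs_add_le (σ * t) m, abs_nonneg m, abs_nonneg t]
    rw [norm_mul, norm_of_nonneg (exp_pos _).le, Real.norm_eq_abs, ← mul_assoc]
    gcongr
    calc |f (σ * t + m)| ≤ C * (1 + |σ * t + m|) := hbound _
      _ ≤ C * ((1 + |m|) * (1 + |t|)) := by gcongr
      _ = C * (1 + |m|) * (1 + |t|) := by ring
  · refine Eventually.of_forall fun t => ?_
    have hlin : Tendsto (fun σ : ℝ => σ * t + m) (𝓝 0) (𝓝 m) :=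
      Continuous.tendsto' (by fun_prop) 0 m (by simp)
    exact (hfm.tendsto.comp hlin).mul_const _

theorem tendsto_inv_mul_integral_mul_exp_neg_sq_div {f : ℝ → ℝ} {m C : ℝ}
    (hf : Measurable f) (hfm : ContinuousAt f m) (hbound : ∀ s, |f s| ≤ C * (1 + |s|)) :
    Tendsto (fun σ => σ⁻¹ * ∫ s, f s * exp (-(s - m) ^ 2 / (2 * σ ^ 2))) (𝓝[>] 0)
      (𝓝 (f m * √(2 * π))) := by
  refine ((tendsto_integral_comp_mul_add_mul_exp_neg_sq hf hfm hbound).mono_left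
    nhdsWithin_le_nhds).congr' ?_
  filter_upwards [self_mem_nhdsWithin] with σ (hσ : 0 < σ)
  rw [integral_mul_exp_neg_sq_div_eq_mul_integral_comp f m hσ, inv_mul_cancel_left₀ hσ.ne']

theorem quotient_density_constant_denominator_limit
    (μ1 : ℝ) (μ2 σ1 : ℝ) (hμ2 : 0 < μ2) (x : ℝ) :
    Filter.Tendsto
      (fun σ2 : ℝ => (2 * π * σ1 * σ2)⁻¹ *
        ∫ s in Set.Ioi (0 : ℝ),
          s * Real.exp (-(s - μ2) ^ 2 / (2 * σ2 ^ 2)) *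
            Real.exp (-(x * s - μ1) ^ 2 / (2 * σ1 ^ 2)))
      (nhdsWithin 0 (Set.Ioi 0))
      (nhds (μ2 / (Real.sqrt (2 * π) * σ1) *
        Real.exp (-(x * μ2 - μ1) ^ 2 / (2 * σ1 ^ 2)))) := by
  set g : ℝ → ℝ := fun s => s * exp (-(x * s - μ1) ^ 2 / (2 * σ1 ^ 2))
  have hg : Continuous g := by fun_prop
  have hbound : ∀ s, |(Ioi 0).indicator g s| ≤ 1 * (1 + |s|) := fun s => calc
    _ ≤ |g s| := by simpa only [Real.norm_eq_abs] using norm_indicator_le_norm_self g s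
    _ ≤ |s| * 1 := by
      rw [abs_mul, abs_exp]
      gcongr
      exact exp_le_one_iff.2 (div_nonpos_of_nonpos_of_nonneg (neg_nonpos.2 (sq_nonneg _))
        (by positivity))
    _ ≤ 1 * (1 + |s|) := by linarith
  have hcont : ContinuousAt ((Ioi 0).indicator g) μ2 :=
    hg.continuousAt.congr <|
      mem_of_superset (Ioi_mem_nhds hμ2) fun s hs => (indicator_of_mem hs g).symm
  have hlim := (tendsto_inv_mul_integral_mul_exp_neg_sq_div
    (hg.measurable.indicator measurableSet_Ioi) hcont hbound).const_mul (2 * π * σ1)⁻¹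
  convert hlim using 2 with σ2
  · rw [mul_inv, mul_assoc, ← integral_indicator measurableSet_Ioi]
    congr 3 with s
    simp only [indicator_apply, g]
    split_ifs <;> ring
  · rw [indicator_of_mem (mem_Ioi.2 hμ2)]
    simp only [g]
    field_simp
    rw [sq_sqrt (by positivity)]
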